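/- arXiv:2207.03545 — 3 statements merged into one kernel-verified Lean document; each statement's English description precedes it below -/
import Mathlib

section
/- Let Y be a nonnegative random variable, let p: [t₁,∞) → [0,∞) be nondecreasing with 0 < p(2t) ≤ b·p(t) for all t ≥ t₁ (for some constants b > 1, t₁ > 0) and lim_{t→∞} p(t)·P(Y > t) = 0, and let h: [t₂,∞) → [0,∞) be nondecreasing with lim_{t→∞} h(t) = ∞ and lim_{t→∞} h(t+1)/h(t) = 1. Then limsup over integers n→∞ of log(p(n)·P(Y > n))/h(n) equals limsup over reals t→∞ of log(p(t)·P(Y > t))/h(t). -/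
open Filter MeasureTheory Set Topology

/-!
The integer limsup is trivially at most the real one. Conversely, for `t ∈ [n, n + 1)` monotonicity
and doubling of `p` give `p t ≤ p (2n) ≤ b p n`, so the log-tail at `t` is at most `log b` plus the
log-tail at `n = ⌊t⌋`. If the latter is eventually below `c h n` with `c < 0`, the numerator
`log b + c h n` is eventually nonpositive, so replacing `h t` by the larger `h (n + 1)` bounds the
quotient at `t` by `(log b + c h n) / h (n + 1) → c`, as `h → ∞` and `h (n + 1) / h n → 1`.
Thresholds `c ≥ 0` are free: `p t P(Y > t) → 0` makes the log-tail eventually nonpositive.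
-/

lemma ENNReal.log_le_log_add_of_le_ofReal_mul {x y : ENNReal} {b : ℝ} (hb : 0 < b)
    (hxy : x ≤ ENNReal.ofReal b * y) : ENNReal.log x ≤ Real.log b + ENNReal.log y :=
  calc ENNReal.log x ≤ ENNReal.log (ENNReal.ofReal b * y) := ENNReal.log_le_log hxy
    _ = Real.log b + ENNReal.log y := by rw [ENNReal.log_mul_add, ENNReal.log_ofReal_of_pos hb]

lemma EReal.div_le_coe_div_of_nonpos {z : EReal} {a u v : ℝ} (hz : z ≤ a) (ha : a ≤ 0)
    (hu : 0 < u) (huv : u ≤ v) : z / u ≤ ((a / v : ℝ) : EReal) :=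
  calc z / u ≤ (a : EReal) / u := EReal.div_le_div_right_of_nonneg (by exact_mod_cast hu.le) hz
    _ = ((a / u : ℝ) : EReal) := (EReal.coe_div a u).symm
    _ ≤ ((a / v : ℝ) : EReal) := by
      rw [EReal.coe_le_coe_iff, div_le_div_iff₀ hu (hu.trans_le huv)]
      nlinarith

lemma tendsto_add_mul_div_apply_add_one {h : ℝ → ℝ} (hinf : Tendsto h atTop atTop)
    (hratio : Tendsto (fun t => h (t + 1) / h t) atTop (𝓝 1)) (a c : ℝ) :
    Tendsto (fun t => (a + c * h t) / h (t + 1)) atTop (𝓝 c) := by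
  have hshift : Tendsto (fun t => h (t + 1)) atTop atTop :=
    hinf.comp (tendsto_atTop_add_const_right _ 1 tendsto_id)
  have hinv : Tendsto (fun t => h t / h (t + 1)) atTop (𝓝 1) := by
    simpa only [inv_div, inv_one] using hratio.inv₀ one_ne_zero
  have hsum := (tendsto_const_nhds (x := a).div_atTop hshift).add (hinv.const_mul c)
  simp only [zero_add, mul_one] at hsum
  simpa only [add_div, mul_div_assoc] using hsum

lemma eventually_le_mul_natFloor {p : ℝ → ℝ} {b t₁ : ℝ} (hmono : MonotoneOn p (Ici t₁))
    (hdouble : ∀ t, t₁ ≤ t → p (2 * t) ≤ b * p t) :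
    ∀ᶠ t in atTop, p t ≤ b * p ⌊t⌋₊ := by
  filter_upwards [tendsto_nat_floor_atTop.eventually
      (tendsto_natCast_atTop_atTop.eventually_ge_atTop (max t₁ 1)),
    eventually_ge_atTop 0] with t hn ht0
  have hn₁ : t₁ ≤ ⌊t⌋₊ := le_of_max_le_left hn
  have hn1 : (1 : ℝ) ≤ ⌊t⌋₊ := le_of_max_le_right hn
  have ht : t ≤ ⌊t⌋₊ + 1 := (Nat.lt_floor_add_one t).le
  have ht₁ : t₁ ≤ t := hn₁.trans (Nat.floor_le ht0)
  calc p t ≤ p (⌊t⌋₊ + 1) := hmono ht₁ (ht₁.trans ht) ht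
    _ ≤ p (2 * ⌊t⌋₊) := hmono (ht₁.trans ht) (by simp only [mem_Ici]; linarith) (by linarith)
    _ ≤ b * p ⌊t⌋₊ := hdouble _ hn₁

section LogTail

variable {X : ℝ → ENNReal} {h : ℝ → ℝ} {b t₂ : ℝ}

lemma limsup_log_div_le_of_eventually_log_le (hb : 0 < b)
    (hX : ∀ᶠ t in atTop, X t ≤ ENNReal.ofReal b * X ⌊t⌋₊) (hmono : MonotoneOn h (Ici t₂))
    (hinf : Tendsto h atTop atTop) (hratio : Tendsto (fun t => h (t + 1) / h t) atTop (𝓝 1))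
    {c : ℝ} (hc : c < 0) (hXc : ∀ᶠ n : ℕ in atTop, ENNReal.log (X n) ≤ c * h n) :
    limsup (fun t => ENNReal.log (X t) / (h t : EReal)) atTop ≤ c := by
  set G : ℝ → ℝ := fun s => (Real.log b + c * h s) / h (s + 1)
  have hG : Tendsto (fun t : ℝ => ((G ⌊t⌋₊ : ℝ) : EReal)) atTop (𝓝 c) :=
    EReal.tendsto_coe.2 ((tendsto_add_mul_div_apply_add_one hinf hratio _ _).comp
      (tendsto_natCast_atTop_atTop.comp tendsto_nat_floor_atTop))
  have hreal : ∀ᶠ s : ℝ in atTop, Real.log b + c * h s ≤ 0 :=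
    (tendsto_atBot_add_const_left _ _ (hinf.const_mul_atTop_of_neg hc)).eventually_le_atBot 0
  have hnat := hXc.and (tendsto_natCast_atTop_atTop.eventually hreal)
  have hbound : ∀ᶠ t in atTop, ENNReal.log (X t) / (h t : EReal) ≤ ((G ⌊t⌋₊ : ℝ) : EReal) := by
    filter_upwards [tendsto_nat_floor_atTop.eventually hnat, hX, eventually_ge_atTop t₂,
      hinf.eventually_gt_atTop 0] with t ⟨hlog, hnum⟩ hXt ht₂ hpos
    have hlog' : ENNReal.log (X t) ≤ ((Real.log b + c * h ⌊t⌋₊ : ℝ) : EReal) := by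
      refine (ENNReal.log_le_log_add_of_le_ofReal_mul hb hXt).trans ?_
      rw [EReal.coe_add, EReal.coe_mul]
      exact add_le_add_right hlog _
    have ht : t ≤ ⌊t⌋₊ + 1 := (Nat.lt_floor_add_one t).le
    exact EReal.div_le_coe_div_of_nonpos hlog' hnum hpos (hmono ht₂ (ht₂.trans ht) ht)
  exact (limsup_le_limsup hbound).trans_eq hG.limsup_eq

lemma limsup_log_div_le_limsup_nat (hb : 0 < b)
    (hX : ∀ᶠ t in atTop, X t ≤ ENNReal.ofReal b * X ⌊t⌋₊) (hX1 : ∀ᶠ t in atTop, X t ≤ 1)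
    (hmono : MonotoneOn h (Ici t₂)) (hinf : Tendsto h atTop atTop)
    (hratio : Tendsto (fun t => h (t + 1) / h t) atTop (𝓝 1)) :
    limsup (fun t => ENNReal.log (X t) / (h t : EReal)) atTop
      ≤ limsup (fun n : ℕ => ENNReal.log (X n) / (h n : EReal)) atTop := by
  refine EReal.le_of_forall_lt_iff_le.1 fun c hc => ?_
  rcases le_or_gt 0 c with hc0 | hc0
  · have hnonpos : ∀ᶠ t in atTop, ENNReal.log (X t) / (h t : EReal) ≤ 0 := by
      filter_upwards [hX1, hinf.eventually_gt_atTop 0] with t hXt hpos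
      exact EReal.div_nonpos_of_nonpos_of_nonneg (ENNReal.log_le_zero_iff.2 hXt)
        (by exact_mod_cast hpos.le)
    exact (limsup_le_of_le (by isBoundedDefault) hnonpos).trans (by exact_mod_cast hc0)
  · refine limsup_log_div_le_of_eventually_log_le hb hX hmono hinf hratio hc0 ?_
    filter_upwards [eventually_lt_of_limsup_lt hc,
      (hinf.comp tendsto_natCast_atTop_atTop).eventually_gt_atTop 0] with n hn hpos
    rw [mul_comm]
    exact (EReal.div_le_iff_le_mul (by exact_mod_cast hpos) (EReal.coe_ne_top _)).1 hn.le

end LogTail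

theorem limsup_nat_eq_limsup_real_general
    {Ω : Type*} [MeasurableSpace Ω] (μ : Measure Ω) [IsProbabilityMeasure μ]
    (Y : Ω → ℝ)
    (p : ℝ → ℝ) (b t₁ : ℝ) (hb : 1 < b)
    (hpnonneg : ∀ t, t₁ ≤ t → 0 ≤ p t)
    (hpmono : ∀ s t, t₁ ≤ s → s ≤ t → p s ≤ p t)
    (hpdouble : ∀ t, t₁ ≤ t → 0 < p (2 * t) ∧ p (2 * t) ≤ b * p t)
    (hpY : Tendsto (fun t => p t * (μ {ω | Y ω > t}).toReal) atTop (nhds 0))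
    (h : ℝ → ℝ) (t₂ : ℝ)
    (hhmono : ∀ s t, t₂ ≤ s → s ≤ t → h s ≤ h t)
    (hhinf : Tendsto h atTop atTop)
    (hhratio : Tendsto (fun t => h (t + 1) / h t) atTop (nhds 1)) :
    Filter.limsup (fun n : ℕ =>
        ENNReal.log (ENNReal.ofReal (p n) * μ {ω | Y ω > (n : ℝ)}) / ((h n : ℝ) : EReal)) atTop
      = Filter.limsup (fun t : ℝ =>
        ENNReal.log (ENNReal.ofReal (p t) * μ {ω | Y ω > t}) / ((h t : ℝ) : EReal)) atTop := by
  set X : ℝ → ENNReal := fun t => ENNReal.ofReal (p t) * μ {ω | Y ω > t}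
  refine le_antisymm
    (tendsto_natCast_atTop_atTop.limsup_comp_le_limsup (u := fun t => ENNReal.log (X t) / h t)) ?_
  refine limsup_log_div_le_limsup_nat (by linarith) ?_ ?_ (fun s hs t _ hst => hhmono s t hs hst)
    hhinf hhratio
  · filter_upwards [eventually_le_mul_natFloor (fun s hs t _ hst => hpmono s t hs hst)
      (fun t ht => (hpdouble t ht).2), eventually_ge_atTop 0] with t hpt ht0
    rw [← mul_assoc, ← ENNReal.ofReal_mul (by linarith)]
    exact mul_le_mul' (ENNReal.ofReal_le_ofReal hpt)
      (measure_mono fun ω hω => (Nat.floor_le ht0).trans_lt hω)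
  · filter_upwards [eventually_ge_atTop t₁, hpY.eventually (eventually_le_nhds one_pos)]
      with t ht hle
    rw [← ENNReal.ofReal_toReal (measure_ne_top μ {ω | Y ω > t}),
      ← ENNReal.ofReal_mul (hpnonneg t ht)]
    exact ENNReal.ofReal_le_one.2 hle

theorem limsup_nat_eq_limsup_real
    {Ω : Type*} [MeasurableSpace Ω] (μ : Measure Ω) [IsProbabilityMeasure μ]
    (Y : Ω → ℝ) (hYmeas : Measurable Y) (hYnonneg : ∀ ω, 0 ≤ Y ω)
    (p : ℝ → ℝ) (b t₁ : ℝ) (hb : 1 < b) (ht₁ : 0 < t₁)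
    (hpnonneg : ∀ t, t₁ ≤ t → 0 ≤ p t)
    (hpmono : ∀ s t, t₁ ≤ s → s ≤ t → p s ≤ p t)
    (hpdouble : ∀ t, t₁ ≤ t → 0 < p (2 * t) ∧ p (2 * t) ≤ b * p t)
    (hpY : Tendsto (fun t => p t * (μ {ω | Y ω > t}).toReal) atTop (nhds 0))
    (h : ℝ → ℝ) (t₂ : ℝ) (ht₂ : 0 < t₂)
    (hhnonneg : ∀ t, t₂ ≤ t → 0 ≤ h t)
    (hhmono : ∀ s t, t₂ ≤ s → s ≤ t → h s ≤ h t)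
    (hhinf : Tendsto h atTop atTop)
    (hhratio : Tendsto (fun t => h (t + 1) / h t) atTop (nhds 1)) :
    Filter.limsup (fun n : ℕ =>
        ENNReal.log (ENNReal.ofReal (p n) * μ {ω | Y ω > (n : ℝ)}) / ((h n : ℝ) : EReal)) atTop
      = Filter.limsup (fun t : ℝ =>
        ENNReal.log (ENNReal.ofReal (p t) * μ {ω | Y ω > t}) / ((h t : ℝ) : EReal)) atTop :=
  limsup_nat_eq_limsup_real_general μ Y p b t₁ hb hpnonneg hpmono hpdouble hpY h t₂ hhmono hhinf
    hhratio
end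

section
/- Let g: [0,∞) → [0,∞) be a nondecreasing regularly varying function with index ρ ≥ 0 and g(t) → ∞. Then for every s > 0, lim_{t→∞} g(log(s·√(t·g(log t)))) / g(log t) = 1/2^ρ. -/
open Filter

private lemma aux_pow (g : ℝ → ℝ) (C T : ℝ) (hC : 1 ≤ C) (hT : 0 < T)
    (hgnonneg : ∀ t, 0 ≤ t → 0 ≤ g t)
    (hgmono : ∀ s t, 0 ≤ s → s ≤ t → g s ≤ g t)
    (hdbl : ∀ t, T ≤ t → g (2 * t) ≤ C * g t) :
    ∀ n : ℕ, ∀ u, 0 ≤ u → u ≤ 2 ^ n * (2 * T) → g u ≤ C ^ n * g (2 * T) := by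
  intro n
  induction n with
  | zero =>
    intro u hu0 hu
    simpa using hgmono u (2 * T) hu0 (by simpa using hu)
  | succ n ih =>
    intro u hu0 hu
    by_cases h : u ≤ 2 ^ n * (2 * T)
    · calc g u ≤ C ^ n * g (2 * T) := ih u hu0 h
        _ ≤ C ^ (n + 1) * g (2 * T) := by
          apply mul_le_mul_of_nonneg_right _ (hgnonneg _ (by positivity))
          exact pow_le_pow_right₀ hC (Nat.le_succ n)
    · push_neg at h
      have h1 : (1 : ℝ) ≤ 2 ^ n := one_le_pow₀ (by norm_num : (1:ℝ) ≤ 2)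
      have hu2T : T ≤ u / 2 := by nlinarith
      have hp : (2 : ℝ) ^ (n + 1) = 2 ^ n * 2 := pow_succ 2 n
      have huh : u / 2 ≤ 2 ^ n * (2 * T) := by
        rw [hp] at hu; linarith
      have hrec := hdbl (u / 2) hu2T
      have heq : 2 * (u / 2) = u := by ring
      calc g u = g (2 * (u / 2)) := by rw [heq]
        _ ≤ C * g (u / 2) := hrec
        _ ≤ C * (C ^ n * g (2 * T)) :=
            mul_le_mul_of_nonneg_left (ih (u / 2) (by linarith) huh) (le_trans zero_le_one hC)
        _ = C ^ (n + 1) * g (2 * T) := by ring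

private lemma log_g_bound (g : ℝ → ℝ) (ρ : ℝ)
    (hgnonneg : ∀ t, 0 ≤ t → 0 ≤ g t)
    (hgmono : ∀ s t, 0 ≤ s → s ≤ t → g s ≤ g t)
    (hgrv : ∀ x : ℝ, 0 < x → Tendsto (fun t => g (x * t) / g t) atTop (nhds (x ^ ρ)))
    (hginf : Tendsto g atTop atTop)
    {ε : ℝ} (hε : 0 < ε) :
    ∀ᶠ u in atTop, Real.log (g u) ≤ ε * u := by
  set C : ℝ := (2 : ℝ) ^ ρ + 1 with hCdef
  have h2ρ : (0 : ℝ) < (2 : ℝ) ^ ρ := Real.rpow_pos_of_pos two_pos ρ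
  have hC : 1 < C := by simp only [hCdef]; linarith
  have h1 : ∀ᶠ t in atTop, g (2 * t) / g t < C :=
    (hgrv 2 two_pos).eventually_lt_const (lt_add_one _)
  have h2 : ∀ᶠ t in atTop, (1 : ℝ) ≤ g t := hginf.eventually_ge_atTop 1
  obtain ⟨T0, hT0⟩ := eventually_atTop.mp (h1.and h2)
  set T : ℝ := max T0 1 with hTdef
  have hT1 : (1 : ℝ) ≤ T := le_max_right _ _
  have hTprop : ∀ t, T ≤ t → g (2 * t) / g t < C ∧ 1 ≤ g t := fun t ht =>
    hT0 t (le_trans (le_max_left _ _) ht)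
  have hdbl : ∀ t, T ≤ t → g (2 * t) ≤ C * g t := by
    intro t ht
    obtain ⟨ha, hb⟩ := hTprop t ht
    have hgt : (0 : ℝ) < g t := by linarith
    rw [div_lt_iff₀ hgt] at ha
    linarith
  have key := aux_pow g C T hC.le (by linarith) hgnonneg hgmono hdbl
  have hg2T : 1 ≤ g (2 * T) := (hTprop (2 * T) (by linarith)).2
  set K2 : ℝ := Real.log C / Real.log 2 with hK2def
  set K1 : ℝ := Real.log C + Real.log (g (2 * T)) with hK1def
  have hlogC : 0 ≤ Real.log C := Real.log_nonneg hC.le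
  have hbase : ∀ u, 2 * T ≤ u → Real.log (g u) ≤ K2 * Real.log u + K1 := by
    intro u hu
    have hu1 : (1 : ℝ) ≤ u := by linarith
    set x := u / (2 * T) with hxdef
    have h2T : (0 : ℝ) < 2 * T := by linarith
    have hx1 : 1 ≤ x := (one_le_div h2T).mpr hu
    set n := ⌈Real.logb 2 x⌉₊ with hndef
    have hlogb0 : 0 ≤ Real.logb 2 x := Real.logb_nonneg one_lt_two hx1
    have hxle : x ≤ (2 : ℝ) ^ n := by
      calc x = (2 : ℝ) ^ (Real.logb 2 x) :=
            (Real.rpow_logb two_pos (by norm_num) (by linarith)).symm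
        _ ≤ (2 : ℝ) ^ ((n : ℕ) : ℝ) :=
            Real.rpow_le_rpow_of_exponent_le one_le_two (Nat.le_ceil _)
        _ = (2 : ℝ) ^ n := Real.rpow_natCast 2 n
    have huub : u ≤ 2 ^ n * (2 * T) := by
      rw [hxdef, div_le_iff₀ h2T] at hxle
      linarith [hxle]
    have hgle := key n u (by linarith) huub
    have hgu1 : 1 ≤ g u := (hTprop u (by linarith)).2
    have hCpos : (0 : ℝ) < C := by linarith
    have hlog1 : Real.log (g u) ≤ Real.log (C ^ n * g (2 * T)) :=
      Real.log_le_log (by linarith) hgle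
    rw [Real.log_mul (by positivity) (by linarith), Real.log_pow] at hlog1
    have hn : (n : ℝ) ≤ Real.logb 2 x + 1 := (Nat.ceil_lt_add_one hlogb0).le
    have hlogb_le : Real.logb 2 x ≤ Real.log u / Real.log 2 := by
      have hxu : x ≤ u := by
        rw [hxdef, div_le_iff₀ h2T]; nlinarith
      have hx0 : (0:ℝ) < x := by linarith
      have hlx : Real.log x ≤ Real.log u := Real.log_le_log hx0 hxu
      have hlog2 : (0:ℝ) < Real.log 2 := Real.log_pos one_lt_two
      rw [Real.logb]
      exact (div_le_div_iff_of_pos_right hlog2).mpr hlx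
    have hlogu : 0 ≤ Real.log u := Real.log_nonneg hu1
    have hnC : (n : ℝ) * Real.log C ≤ (Real.log u / Real.log 2 + 1) * Real.log C := by
      apply mul_le_mul_of_nonneg_right _ hlogC
      linarith
    have : (Real.log u / Real.log 2 + 1) * Real.log C = K2 * Real.log u + Real.log C := by
      rw [hK2def]; ring
    linarith
  have hlittle : Tendsto (fun u : ℝ => Real.log u / u) atTop (nhds 0) :=
    Real.isLittleO_log_id_atTop.tendsto_div_nhds_zero
  have hinv : Tendsto (fun u : ℝ => 1 / u) atTop (nhds 0) := by
    simpa [one_div] using tendsto_inv_atTop_zero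
  have hcomb : Tendsto (fun u : ℝ => K2 * (Real.log u / u) + K1 * (1 / u)) atTop (nhds 0) := by
    have := (hlittle.const_mul K2).add (hinv.const_mul K1)
    simpa using this
  have hev : ∀ᶠ u in atTop, K2 * (Real.log u / u) + K1 * (1 / u) < ε :=
    hcomb.eventually_lt_const hε
  filter_upwards [hev, eventually_ge_atTop (max (2 * T) 1)] with u h1u h2u
  have hu1 : (1 : ℝ) ≤ u := le_trans (le_max_right _ _) h2u
  have h2Tu : 2 * T ≤ u := le_trans (le_max_left _ _) h2u
  have hb := hbase u h2Tu
  have hu0 : (0 : ℝ) < u := lt_of_lt_of_le one_pos hu1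
  have hmul : K2 * Real.log u + K1 ≤ ε * u := by
    have heq : (K2 * (Real.log u / u) + K1 * (1 / u)) * u = K2 * Real.log u + K1 := by
      field_simp
    nlinarith [h1u, hu0]
  linarith

theorem rv_composition_limit
    (g : ℝ → ℝ) (ρ : ℝ) (hρ : 0 ≤ ρ)
    (hgnonneg : ∀ t, 0 ≤ t → 0 ≤ g t)
    (hgmono : ∀ s t, 0 ≤ s → s ≤ t → g s ≤ g t)
    (hgrv : ∀ x : ℝ, 0 < x → Tendsto (fun t => g (x * t) / g t) atTop (nhds (x ^ ρ)))
    (hginf : Tendsto g atTop atTop)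
    (s : ℝ) (hs : 0 < s) :
    Tendsto (fun t : ℝ =>
        g (Real.log (s * Real.sqrt (t * g (Real.log t)))) / g (Real.log t)) atTop
      (nhds (1 / (2 : ℝ) ^ ρ)) := by
  have hhalf : (0 : ℝ) < 1 / 2 := by norm_num
  have hconst : (1 : ℝ) / (2 : ℝ) ^ ρ = ((1 : ℝ) / 2) ^ ρ := by
    rw [Real.div_rpow zero_le_one (by norm_num : (0:ℝ) ≤ 2), Real.one_rpow]
  rw [hconst, Metric.tendsto_nhds]
  intro δ hδ
  have hcont : ContinuousAt (fun x : ℝ => x ^ ρ) (1 / 2) :=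
    Real.continuousAt_rpow_const _ _ (Or.inl (by norm_num))
  have hev0 : ∀ᶠ x : ℝ in nhds (1 / 2), x ^ ρ < ((1 : ℝ) / 2) ^ ρ + δ / 2 :=
    hcont.tendsto.eventually_lt_const (by linarith)
  obtain ⟨ε', hε', hball⟩ := Metric.eventually_nhds_iff_ball.mp hev0
  set ε : ℝ := ε' / 2 with hεdef
  have hεpos : 0 < ε := half_pos hε'
  set b : ℝ := 1 / 2 + ε with hbdef
  have hbpos : (0 : ℝ) < b := by rw [hbdef]; linarith
  have hbp : b ^ ρ < ((1 : ℝ) / 2) ^ ρ + δ / 2 := by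
    apply hball
    rw [Metric.mem_ball, Real.dist_eq, hbdef]
    rw [show (1 : ℝ) / 2 + ε - 1 / 2 = ε by ring, abs_of_pos hεpos]
    rw [hεdef]; linarith
  have E1 : ∀ᶠ t in atTop,
      |g ((1 / 2) * Real.log t) / g (Real.log t) - ((1 : ℝ) / 2) ^ ρ| < δ / 2 := by
    have h := (hgrv (1 / 2) hhalf).comp Real.tendsto_log_atTop
    have := Metric.tendsto_nhds.mp h (δ / 2) (half_pos hδ)
    simpa [Real.dist_eq, Function.comp] using this
  have E2 : ∀ᶠ t in atTop, |g (b * Real.log t) / g (Real.log t) - b ^ ρ| < δ / 2 := by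
    have h := (hgrv b hbpos).comp Real.tendsto_log_atTop
    have := Metric.tendsto_nhds.mp h (δ / 2) (half_pos hδ)
    simpa [Real.dist_eq, Function.comp] using this
  have E3 : ∀ᶠ t in atTop, -2 * Real.log s ≤ Real.log (g (Real.log t)) := by
    have h := (Real.tendsto_log_atTop.comp (hginf.comp Real.tendsto_log_atTop)).eventually_ge_atTop
      (-2 * Real.log s)
    simpa [Function.comp] using h
  have E4 : ∀ᶠ t in atTop, Real.log (g (Real.log t)) ≤ ε * Real.log t :=
    Real.tendsto_log_atTop.eventually (log_g_bound g ρ hgnonneg hgmono hgrv hginf hεpos)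
  have E5 : ∀ᶠ t in atTop, Real.log s ≤ ε / 2 * Real.log t := by
    have h : Tendsto (fun t : ℝ => ε / 2 * Real.log t) atTop atTop :=
      Real.tendsto_log_atTop.const_mul_atTop (half_pos hεpos)
    exact h.eventually_ge_atTop _
  have E6 : ∀ᶠ t in atTop, (1 : ℝ) ≤ g (Real.log t) := by
    have h := (hginf.comp Real.tendsto_log_atTop).eventually_ge_atTop 1
    simpa [Function.comp] using h
  have E7 : ∀ᶠ t : ℝ in atTop, (1 : ℝ) ≤ t := eventually_ge_atTop 1
  have E8 : ∀ᶠ t in atTop, (0 : ℝ) ≤ Real.log t := Real.tendsto_log_atTop.eventually_ge_atTop 0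
  filter_upwards [E1, E2, E3, E4, E5, E6, E7, E8] with t h1 h2 h3 h4 h5 h6 h7 h8
  set u := Real.log t with hu
  have hgu : (0 : ℝ) < g u := lt_of_lt_of_le one_pos h6
  have ht0 : (0 : ℝ) < t := lt_of_lt_of_le one_pos h7
  have hprod : 0 < t * g u := mul_pos ht0 hgu
  have hA : Real.log (s * Real.sqrt (t * g u)) = Real.log s + (u + Real.log (g u)) / 2 := by
    rw [Real.log_mul (ne_of_gt hs) (ne_of_gt (Real.sqrt_pos.mpr hprod)),
      Real.log_sqrt hprod.le, Real.log_mul (ne_of_gt ht0) (ne_of_gt hgu)]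
  set A := Real.log (s * Real.sqrt (t * g u)) with hAdef
  have hAlb : 1 / 2 * u ≤ A := by rw [hA]; linarith
  have hAub : A ≤ b * u := by
    have hbu : b * u = 1 / 2 * u + ε * u := by rw [hbdef]; ring
    rw [hA, hbu]; linarith
  have hhu0 : (0 : ℝ) ≤ 1 / 2 * u := mul_nonneg (by norm_num) h8
  have hmono1 : g (1 / 2 * u) ≤ g A := hgmono _ _ hhu0 hAlb
  have hmono2 : g A ≤ g (b * u) := hgmono _ _ (le_trans hhu0 hAlb) hAub
  rw [Real.dist_eq, abs_sub_lt_iff]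
  rw [abs_sub_lt_iff] at h1 h2
  obtain ⟨h1a, h1b⟩ := h1
  obtain ⟨h2a, h2b⟩ := h2
  have hdiv1 : g (1 / 2 * u) / g u ≤ g A / g u := (div_le_div_iff_of_pos_right hgu).mpr hmono1
  have hdiv2 : g A / g u ≤ g (b * u) / g u := (div_le_div_iff_of_pos_right hgu).mpr hmono2
  constructor
  · linarith
  · linarith
end

section
/- Let h: [1,∞) → [0,∞) be a continuous, nondecreasing slowly varying function with h(t) → ∞. Then there exists a function φ(t) with φ(t) ∼ √t / h(t) as t → ∞, such that φ(2t)/φ(t) → √2, log(t/φ(t)²)/h(t) → 0, and φ is eventually strictly increasing. -/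
/-!
Let `L(t) = (log 2)⁻¹ ∫_t^{2t} log h(x) dx/x` be the logarithmic mean of `log h` over `[t, 2t]`
and `φ(t) = √t · exp(-L(t))`. As `h` is nondecreasing, `log h(t) ≤ L(t) ≤ log h(2t)`, and
`h(2t)/h(t) → 1` squeezes `L - log h` to `0`; this gives `φ ∼ √t / h`, `φ(2t)/φ(t) → √2` and
`log(t/φ(t)²) = 2 L(t) = o(h(t))`. Unlike `√t / h`, the function `φ` is eventually increasing:
by the dilation invariance of `dx/x`,
`L(t) - L(s) = (log 2)⁻¹ ∫_s^t (log h(2x) - log h(x)) dx/x ≤ ¼ log(t/s)` as soon as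
`log h(2x) - log h(x) ≤ ¼ log 2` on `[s, t]`, so `log φ(t) - log φ(s) ≥ ¼ log(t/s)`.
-/

open Filter

open Real Set Topology MeasureTheory

section integralDivSelf

variable {f : ℝ → ℝ} {a s t c : ℝ}

theorem MonotoneOn.intervalIntegrable_of_Ici (hf : MonotoneOn f (Ici a)) (hs : a ≤ s)
    (ht : a ≤ t) :
    IntervalIntegrable f volume s t :=
  (hf.mono fun _ hx => le_trans (le_min hs ht) hx.1).intervalIntegrable

theorem IntervalIntegrable.div_self (hs : 0 < s) (ht : 0 < t)
    (hf : IntervalIntegrable f volume s t) : IntervalIntegrable (fun x => f x / x) volume s t :=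
  hf.mul_continuousOn <| continuousOn_inv₀.mono fun _ hx =>
    (lt_min hs ht |>.trans_le hx.1).ne'

theorem integral_div_self_le (hs : 0 < s) (hst : s ≤ t) (hf : IntervalIntegrable f volume s t)
    (hfc : ∀ x ∈ Icc s t, f x ≤ c) : ∫ x in s..t, f x / x ≤ c * log (t / s) := by
  have ht : 0 < t := hs.trans_le hst
  calc ∫ x in s..t, f x / x ≤ ∫ x in s..t, c / x :=
        intervalIntegral.integral_mono_on hst (hf.div_self hs ht)
          (intervalIntegrable_const.div_self hs ht)
          fun x hx => div_le_div_of_nonneg_right (hfc x hx) (hs.le.trans hx.1)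
    _ = c * log (t / s) := by
        simp only [div_eq_mul_inv c, intervalIntegral.integral_const_mul,
          integral_inv_of_pos hs ht]

theorem le_integral_div_self (hs : 0 < s) (hst : s ≤ t) (hf : IntervalIntegrable f volume s t)
    (hcf : ∀ x ∈ Icc s t, c ≤ f x) : c * log (t / s) ≤ ∫ x in s..t, f x / x := by
  have := integral_div_self_le (f := fun x => -f x) (c := -c) hs hst hf.neg
    fun x hx => neg_le_neg (hcf x hx)
  simp only [neg_div, intervalIntegral.integral_neg, neg_mul] at this
  linarith

theorem integral_comp_mul_left_div_self (hc : c ≠ 0) :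
    ∫ x in s..t, f (c * x) / x = ∫ x in c * s..c * t, f x / x := by
  rw [← intervalIntegral.smul_integral_comp_mul_left, ← intervalIntegral.integral_smul]
  refine intervalIntegral.integral_congr fun x _ => ?_
  rw [smul_eq_mul, ← mul_div_assoc, mul_div_mul_left _ _ hc]

end integralDivSelf

noncomputable def logAvg (g : ℝ → ℝ) (t : ℝ) : ℝ :=
  (∫ x in t..2 * t, g x / x) / log 2

section logAvg

variable {g : ℝ → ℝ} {a : ℝ}

theorem MonotoneOn.comp_two_mul (hg : MonotoneOn g (Ici a)) (ha : 0 ≤ a) :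
    MonotoneOn (fun x => g (2 * x)) (Ici a) := fun x hx y hy hxy =>
  hg (by simp only [mem_Ici] at hx ⊢; linarith) (by simp only [mem_Ici] at hy ⊢; linarith)
    (by linarith)

theorem le_logAvg (ha : 0 < a) (hg : MonotoneOn g (Ici a)) {t : ℝ} (ht : a ≤ t) :
    g t ≤ logAvg g t := by
  have ht0 : 0 < t := ha.trans_le ht
  have h2t : a ≤ 2 * t := by linarith
  rw [logAvg, le_div_iff₀ (log_pos one_lt_two)]
  have := le_integral_div_self (c := g t) ht0 (by linarith) (hg.intervalIntegrable_of_Ici ht h2t)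
    fun x hx => hg ht (ht.trans hx.1) hx.1
  rwa [mul_div_cancel_right₀ _ ht0.ne'] at this

theorem logAvg_le_two_mul (ha : 0 < a) (hg : MonotoneOn g (Ici a)) {t : ℝ} (ht : a ≤ t) :
    logAvg g t ≤ g (2 * t) := by
  have ht0 : 0 < t := ha.trans_le ht
  have h2t : a ≤ 2 * t := by linarith
  rw [logAvg, div_le_iff₀ (log_pos one_lt_two)]
  have := integral_div_self_le (c := g (2 * t)) ht0 (by linarith)
    (hg.intervalIntegrable_of_Ici ht h2t)
    fun x hx => hg (ht.trans hx.1) h2t hx.2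
  rwa [mul_div_cancel_right₀ _ ht0.ne'] at this

theorem tendsto_logAvg_sub (ha : 0 < a) (hg : MonotoneOn g (Ici a))
    (hg2 : Tendsto (fun t => g (2 * t) - g t) atTop (𝓝 0)) :
    Tendsto (fun t => logAvg g t - g t) atTop (𝓝 0) := by
  refine tendsto_of_tendsto_of_tendsto_of_le_of_le' tendsto_const_nhds hg2 ?_ ?_ <;>
    filter_upwards [eventually_ge_atTop a] with t ht
  · linarith [le_logAvg ha hg ht]
  · linarith [logAvg_le_two_mul ha hg ht]

theorem tendsto_logAvg_two_mul_sub (ha : 0 < a) (hg : MonotoneOn g (Ici a))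
    (hg2 : Tendsto (fun t => g (2 * t) - g t) atTop (𝓝 0)) :
    Tendsto (fun t => logAvg g (2 * t) - logAvg g t) atTop (𝓝 0) := by
  have hD := tendsto_logAvg_sub ha hg hg2
  have := ((hD.comp (tendsto_id.const_mul_atTop two_pos)).sub hD).add hg2
  simp only [sub_zero, add_zero] at this
  exact this.congr fun t => by simp only [Function.comp_apply, id]; ring

theorem logAvg_sub_logAvg (ha : 0 < a) (hg : MonotoneOn g (Ici a)) {s t : ℝ} (hs : a ≤ s)
    (ht : a ≤ t) :
    logAvg g t - logAvg g s = (∫ x in s..t, (g (2 * x) - g x) / x) / log 2 := by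
  have hdiv : ∀ {f : ℝ → ℝ}, MonotoneOn f (Ici a) → ∀ {u v : ℝ}, a ≤ u → a ≤ v →
      IntervalIntegrable (fun x => f x / x) volume u v := fun hf _ _ hu hv =>
    (hf.intervalIntegrable_of_Ici hu hv).div_self (ha.trans_le hu) (ha.trans_le hv)
  rw [logAvg, logAvg, ← sub_div,
    intervalIntegral.integral_interval_sub_interval_comm' (hdiv hg ht (by linarith))
      (hdiv hg hs (by linarith)) (hdiv hg ht hs),
    ← integral_comp_mul_left_div_self two_ne_zero,
    ← intervalIntegral.integral_sub (hdiv (hg.comp_two_mul ha.le) hs ht) (hdiv hg hs ht)]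
  simp only [sub_div]

theorem logAvg_sub_logAvg_le (ha : 0 < a) (hg : MonotoneOn g (Ici a)) {s t c : ℝ} (hs : a ≤ s)
    (hst : s ≤ t) (hc : ∀ x ∈ Icc s t, g (2 * x) - g x ≤ c) :
    logAvg g t - logAvg g s ≤ c * log (t / s) / log 2 := by
  have ht : a ≤ t := hs.trans hst
  have hs0 : 0 < s := ha.trans_le hs
  rw [logAvg_sub_logAvg ha hg hs (hs.trans hst)]
  gcongr
  exact integral_div_self_le hs0 hst (((hg.comp_two_mul ha.le).intervalIntegrable_of_Ici hs
    (hs.trans hst)).sub (hg.intervalIntegrable_of_Ici hs (hs.trans hst))) hc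

theorem exists_strictMonoOn_mul_log_sub_logAvg (ha : 0 < a) (hg : MonotoneOn g (Ici a))
    (hg2 : Tendsto (fun t => g (2 * t) - g t) atTop (𝓝 0)) {c : ℝ} (hc : 0 < c) :
    ∃ t₀, StrictMonoOn (fun t => c * log t - logAvg g t) (Ici t₀) := by
  obtain ⟨b, hb⟩ := eventually_atTop.1 <|
    hg2.eventually (eventually_le_nhds (by positivity : 0 < c * log 2 / 2))
  refine ⟨max a b, fun s hs t ht hst => ?_⟩
  have hs' : a ≤ s := le_of_max_le_left hs
  have hs0 : 0 < s := ha.trans_le hs'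
  have hlog : 0 < log (t / s) := log_pos ((one_lt_div hs0).2 hst)
  have hL := logAvg_sub_logAvg_le ha hg hs' hst.le fun x hx =>
    hb x ((le_of_max_le_right hs).trans hx.1)
  have hlog2 : c * log 2 / 2 * log (t / s) / log 2 = c / 2 * log (t / s) := by
    field_simp [(log_pos one_lt_two).ne']
  have hslope : c / 2 * log (t / s) < c * log (t / s) := by nlinarith [mul_pos hc hlog]
  rw [hlog2] at hL
  rw [log_div (hs0.trans hst).ne' hs0.ne'] at hslope hL
  simp only
  linarith

end logAvg

noncomputable def smoothSqrtDiv (h : ℝ → ℝ) (t : ℝ) : ℝ :=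
  exp (log t / 2 - logAvg (fun x => log (h x)) t)

section smoothSqrtDiv

variable {h : ℝ → ℝ}

theorem tendsto_smoothSqrtDiv_div (hpos : ∀ᶠ t in atTop, 0 < h t)
    (hD : Tendsto (fun t => logAvg (fun x => log (h x)) t - log (h t)) atTop (𝓝 0)) :
    Tendsto (fun t => smoothSqrtDiv h t / (√t / h t)) atTop (𝓝 1) := by
  have := (continuous_exp.tendsto _).comp hD.neg
  rw [neg_zero, exp_zero] at this
  refine this.congr' ?_
  filter_upwards [hpos, eventually_gt_atTop 0] with t hht ht
  have hsqrt : √t = exp (log t / 2) := by rw [exp_half, exp_log ht]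
  rw [Function.comp_apply, smoothSqrtDiv, hsqrt]
  simp only [exp_sub, exp_neg, exp_log hht]
  field_simp

theorem tendsto_smoothSqrtDiv_two_mul_div
    (hL : Tendsto (fun t => logAvg (fun x => log (h x)) (2 * t) - logAvg (fun x => log (h x)) t)
      atTop (𝓝 0)) :
    Tendsto (fun t => smoothSqrtDiv h (2 * t) / smoothSqrtDiv h t) atTop (𝓝 (√2)) := by
  have := (continuous_exp.tendsto _).comp ((tendsto_const_nhds (x := log 2 / 2)).sub hL)
  rw [sub_zero, exp_half, exp_log two_pos] at this
  refine this.congr' ?_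
  filter_upwards [eventually_gt_atTop 0] with t ht
  rw [Function.comp_apply, smoothSqrtDiv, smoothSqrtDiv, ← exp_sub, log_mul two_ne_zero ht.ne']
  ring_nf

theorem tendsto_log_div_smoothSqrtDiv_sq_div
    (hD : Tendsto (fun t => logAvg (fun x => log (h x)) t - log (h t)) atTop (𝓝 0))
    (hinf : Tendsto h atTop atTop) :
    Tendsto (fun t => log (t / smoothSqrtDiv h t ^ 2) / h t) atTop (𝓝 0) := by
  have hlog : Tendsto (fun t => log (h t) / h t) atTop (𝓝 0) :=
    isLittleO_log_id_atTop.tendsto_div_nhds_zero.comp hinf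
  have := ((hD.div_atTop hinf).add hlog).const_mul 2
  rw [add_zero, mul_zero] at this
  refine this.congr' ?_
  filter_upwards [eventually_gt_atTop 0, hinf.eventually_gt_atTop 0] with t ht hht
  rw [smoothSqrtDiv, log_div ht.ne' (by positivity), log_pow, log_exp]
  field_simp
  ring

theorem exists_strictMonoOn_smoothSqrtDiv {a : ℝ} (ha : 0 < a)
    (hg : MonotoneOn (fun x => log (h x)) (Ici a))
    (hg2 : Tendsto (fun t => log (h (2 * t)) - log (h t)) atTop (𝓝 0)) :
    ∃ t₀, StrictMonoOn (smoothSqrtDiv h) (Ici t₀) := by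
  obtain ⟨t₀, ht₀⟩ :=
    exists_strictMonoOn_mul_log_sub_logAvg ha hg hg2 (c := 2⁻¹) (by norm_num)
  exact ⟨t₀, exp_strictMono.comp_strictMonoOn (by simpa only [div_eq_inv_mul] using ht₀)⟩

end smoothSqrtDiv

theorem slowly_varying_phi_exists_general
    (h : ℝ → ℝ)
    (hmono : ∀ s t, 1 ≤ s → s ≤ t → h s ≤ h t)
    (hsv : ∀ x : ℝ, 0 < x → Tendsto (fun t => h (x * t) / h t) atTop (nhds 1))
    (hinf : Tendsto h atTop atTop) :
    ∃ φ : ℝ → ℝ,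
      Tendsto (fun t => φ t / (Real.sqrt t / h t)) atTop (nhds 1)
      ∧ Tendsto (fun t => φ (2 * t) / φ t) atTop (nhds (Real.sqrt 2))
      ∧ Tendsto (fun t => Real.log (t / (φ t) ^ 2) / h t) atTop (nhds 0)
      ∧ ∃ t₀ : ℝ, StrictMonoOn φ (Set.Ici t₀) := by
  obtain ⟨a, ha⟩ := eventually_atTop.1 (hinf.eventually_ge_atTop 1)
  have ha₁ : 0 < max a 1 := lt_max_of_lt_right one_pos
  have hg : MonotoneOn (fun t => log (h t)) (Ici (max a 1)) := fun s hs t _ hst =>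
    log_le_log (one_pos.trans_le (ha s (le_of_max_le_left hs)))
      (hmono s t (le_of_max_le_right hs) hst)
  have hg2 : Tendsto (fun t => log (h (2 * t)) - log (h t)) atTop (𝓝 0) := by
    have := (continuousAt_log one_ne_zero).tendsto.comp (hsv 2 two_pos)
    rw [log_one] at this
    refine this.congr' ?_
    filter_upwards [(tendsto_id.const_mul_atTop two_pos).eventually (hinf.eventually_gt_atTop 0),
      hinf.eventually_gt_atTop 0] with t h2t ht
    exact log_div h2t.ne' ht.ne'
  have hD := tendsto_logAvg_sub ha₁ hg hg2
  exact ⟨smoothSqrtDiv h, tendsto_smoothSqrtDiv_div (hinf.eventually_gt_atTop 0) hD,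
    tendsto_smoothSqrtDiv_two_mul_div (tendsto_logAvg_two_mul_sub ha₁ hg hg2),
    tendsto_log_div_smoothSqrtDiv_sq_div hD hinf, exists_strictMonoOn_smoothSqrtDiv ha₁ hg hg2⟩

theorem slowly_varying_phi_exists
    (h : ℝ → ℝ)
    (hcont : ContinuousOn h (Set.Ici 1))
    (hnonneg : ∀ t, 1 ≤ t → 0 ≤ h t)
    (hmono : ∀ s t, 1 ≤ s → s ≤ t → h s ≤ h t)
    (hsv : ∀ x : ℝ, 0 < x → Tendsto (fun t => h (x * t) / h t) atTop (nhds 1))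
    (hinf : Tendsto h atTop atTop) :
    ∃ φ : ℝ → ℝ,
      Tendsto (fun t => φ t / (Real.sqrt t / h t)) atTop (nhds 1)
      ∧ Tendsto (fun t => φ (2 * t) / φ t) atTop (nhds (Real.sqrt 2))
      ∧ Tendsto (fun t => Real.log (t / (φ t) ^ 2) / h t) atTop (nhds 0)
      ∧ ∃ t₀ : ℝ, StrictMonoOn φ (Set.Ici t₀) :=
  slowly_varying_phi_exists_general h hmono hsv hinf
end
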